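/- Let (ρ̂(t), b̂(t), ŵ(t)) : [0,∞) → ℂ³ solve the linear ODE system: d/dt ρ̂ + r b̂ = 0, d/dt b̂ + a r² b̂ - P r ρ̂ = 0, d/dt ŵ + r² ŵ = 0, where r > 0, a > 0, P > 0. Define L(t) = (1/2)(P|ρ̂|² + |b̂|² + |ŵ|² - 2δ r Re(ρ̂ conj(b̂))) with δ > 0 chosen so that δ ≤ min{1/2, a/4, √P/2} and r ≤ min{1/2, √(P/a), √P/2}. Then there exists C₅ > 0 (depending only on a, P, δ) such that d/dt L(t) + C₅ r² L(t) ≤ 0, and consequently L(t) ≤ e^{-C₅ r² t} L(0) for all t ≥ 0. -/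

import Mathlib

/-!
Along solutions, `dL/dt = -r² D` with `D = δP|ρ̂|² + (a - δ)|b̂|² + |ŵ|² - δar Re(ρ̂ conj b̂)`.
Since `16(δr)² ≤ P`, the cross term of `L` is absorbed by Young's inequality, so
`L ≤ P|ρ̂|² + |b̂|² + |ŵ|²`; since `ar² ≤ P` and `δ ≤ min(1/2, a/4)`, the cross term of `D` is
absorbed as well, so `D ≥ (δP/2)|ρ̂|² + (a/2)|b̂|² + |ŵ|²`. Together `D ≥ C L` with
`C = min(δ/2, a/2, 1)`, and Grönwall's inequality gives the exponential decay.
-/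

open Real

/-- The perturbed energy `L(t) = (1/2)(P|ρ̂|² + |b̂|² + |ŵ|² - 2δr Re(ρ̂ conj b̂))`. -/
noncomputable def energyL (P δ r : ℝ) (ρ b w : ℝ → ℂ) (s : ℝ) : ℝ :=
  (1/2) * (P * ‖ρ s‖ ^ 2 + ‖b s‖ ^ 2 + ‖w s‖ ^ 2 -
    2 * δ * r * (ρ s * (starRingEnd ℂ) (b s)).re)

open ComplexConjugate

theorem le_exp_mul_of_hasDerivAt_le_mul {E E' : ℝ → ℝ} {K t : ℝ}
    (hE : ∀ s, 0 ≤ s → HasDerivAt E (E' s) s) (hbound : ∀ s, 0 ≤ s → E' s ≤ K * E s)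
    (ht : 0 ≤ t) : E t ≤ exp (K * t) * E 0 := by
  have hgron := le_gronwallBound_of_liminf_deriv_right_le (f := E) (f' := E') (K := K) (ε := 0)
    (a := 0) (b := t) (fun s hs => (hE s hs.1).continuousAt.continuousWithinAt)
    (fun s hs _ hr => by
      simpa [slope_def_module] using (hE s hs.1).hasDerivWithinAt.liminf_right_slope_le hr)
    le_rfl (fun s hs => by simpa using hbound s hs.1) t ⟨ht, le_rfl⟩
  rwa [gronwallBound_ε0, sub_zero, mul_comm] at hgron

theorem abs_re_mul_conj_le (x y : ℂ) : |(x * conj y).re| ≤ ‖x‖ * ‖y‖ := by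
  simpa using Complex.abs_re_le_norm (x * conj y)

noncomputable def energyDissipation (a P δ r : ℝ) (x y z : ℂ) : ℝ :=
  δ * P * ‖x‖ ^ 2 + (a - δ) * ‖y‖ ^ 2 + ‖z‖ ^ 2 - δ * a * r * (x * conj y).re

section
variable {a P δ r : ℝ} {ρ b w : ℝ → ℂ} {t : ℝ}

theorem hasDerivAt_energyL
    (hρ : HasDerivAt ρ (-(r : ℂ) * b t) t)
    (hb : HasDerivAt b (-(a : ℂ) * (r : ℂ) ^ 2 * b t + (P : ℂ) * (r : ℂ) * ρ t) t)
    (hw : HasDerivAt w (-(r : ℂ) ^ 2 * w t) t) :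
    HasDerivAt (energyL P δ r ρ b w)
      (-r ^ 2 * energyDissipation a P δ r (ρ t) (b t) (w t)) t := by
  have hcross : ∀ s, (ρ s * conj (b s)).re = inner ℝ (b s) (ρ s) := fun s => by
    rw [Complex.inner]
  have H := ((((hρ.norm_sq.const_mul P).add hb.norm_sq).add hw.norm_sq).sub
    ((hb.inner ℝ hρ).const_mul (2 * δ * r))).const_mul (1 / 2 : ℝ)
  unfold energyL
  simp only [hcross]
  refine H.congr_deriv ?_
  simp only [energyDissipation, Complex.inner, Complex.sq_norm, Complex.normSq_apply,
    Complex.mul_re, Complex.mul_im, Complex.add_re, Complex.add_im, Complex.neg_re,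
    Complex.neg_im, Complex.conj_re, Complex.conj_im, ← Complex.ofReal_pow, Complex.ofReal_re,
    Complex.ofReal_im]
  ring

theorem energyL_le (hδr : 16 * (δ * r) ^ 2 ≤ P) :
    energyL P δ r ρ b w t ≤ P * ‖ρ t‖ ^ 2 + ‖b t‖ ^ 2 + ‖w t‖ ^ 2 := by
  have hc := abs_re_mul_conj_le (ρ t) (b t)
  have hamgm := two_mul_le_add_sq (|δ * r| * ‖ρ t‖) ‖b t‖
  have hcross : -(2 * δ * r * (ρ t * conj (b t)).re) ≤ 2 * (|δ * r| * ‖ρ t‖) * ‖b t‖ := by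
    have := neg_abs_le (δ * r * (ρ t * conj (b t)).re)
    rw [abs_mul] at this
    nlinarith [abs_nonneg (δ * r)]
  have hsmall : (|δ * r| * ‖ρ t‖) ^ 2 ≤ P / 16 * ‖ρ t‖ ^ 2 := by
    rw [mul_pow, sq_abs]; gcongr; linarith
  unfold energyL
  nlinarith [sq_nonneg ‖w t‖, sq_nonneg ‖b t‖, sq_nonneg (δ * r), sq_nonneg ‖ρ t‖]

theorem energyDissipation_ge (hδ : 0 ≤ δ) (hr : 0 ≤ r)
    (hδ_half : δ ≤ 1 / 2) (hδa : δ ≤ a / 4) (har : a * r ^ 2 ≤ P) (x y z : ℂ) :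
    δ * P / 2 * ‖x‖ ^ 2 + a / 2 * ‖y‖ ^ 2 + ‖z‖ ^ 2 ≤ energyDissipation a P δ r x y z := by
  have ha : 0 ≤ a := by linarith
  have hc : (x * conj y).re ≤ ‖x‖ * ‖y‖ := (le_abs_self _).trans (abs_re_mul_conj_le x y)
  -- `a r |x| |y| ≤ (a r² |x|² + a |y|²) / 2 ≤ (P |x|² + a |y|²) / 2`
  have hamgm : a * r * (‖x‖ * ‖y‖) ≤ P / 2 * ‖x‖ ^ 2 + a / 2 * ‖y‖ ^ 2 := by
    nlinarith [mul_nonneg ha (sq_nonneg (r * ‖x‖ - ‖y‖)),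
      mul_le_mul_of_nonneg_right har (sq_nonneg ‖x‖)]
  have hcross : δ * a * r * (x * conj y).re ≤ δ * (P / 2 * ‖x‖ ^ 2 + a / 2 * ‖y‖ ^ 2) := by
    calc δ * a * r * (x * conj y).re ≤ δ * (a * r * (‖x‖ * ‖y‖)) := by
          rw [mul_assoc, mul_assoc, ← mul_assoc a]; gcongr
      _ ≤ _ := by gcongr
  unfold energyDissipation
  nlinarith [mul_nonneg (mul_nonneg (sub_nonneg.2 hδ_half) ha) (sq_nonneg ‖y‖),
    mul_nonneg (sub_nonneg.2 hδa) (sq_nonneg ‖y‖)]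

theorem min_mul_energyL_le_energyDissipation (hδ : 0 ≤ δ) (hr : 0 ≤ r) (hδ_half : δ ≤ 1 / 2) (hδa : δ ≤ a / 4)
    (har : a * r ^ 2 ≤ P) (hδr : 16 * (δ * r) ^ 2 ≤ P) :
    min (δ / 2) (min (a / 2) 1) * energyL P δ r ρ b w t ≤
      energyDissipation a P δ r (ρ t) (b t) (w t) := by
  set C := min (δ / 2) (min (a / 2) 1)
  have hC : 0 ≤ C := le_min (by positivity) (le_min (by linarith) zero_le_one)
  calc C * energyL P δ r ρ b w t ≤ C * (P * ‖ρ t‖ ^ 2 + ‖b t‖ ^ 2 + ‖w t‖ ^ 2) :=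
        mul_le_mul_of_nonneg_left (energyL_le hδr) hC
    _ = C * P * ‖ρ t‖ ^ 2 + C * ‖b t‖ ^ 2 + C * ‖w t‖ ^ 2 := by ring
    _ ≤ δ / 2 * P * ‖ρ t‖ ^ 2 + a / 2 * ‖b t‖ ^ 2 + 1 * ‖w t‖ ^ 2 := by
        have hP : 0 ≤ P := le_trans (by positivity) hδr
        gcongr
        · exact min_le_left _ _
        · exact (min_le_right _ _).trans (min_le_left _ _)
        · exact (min_le_right _ _).trans (min_le_right _ _)
    _ = δ * P / 2 * ‖ρ t‖ ^ 2 + a / 2 * ‖b t‖ ^ 2 + ‖w t‖ ^ 2 := by ring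
    _ ≤ energyDissipation a P δ r (ρ t) (b t) (w t) :=
        energyDissipation_ge hδ hr hδ_half hδa har _ _ _

end

/-- Energy decay for the Fourier-transformed linearized system at a fixed low frequency
`|ξ| = r`: under the smallness conditions on `δ` and `r`, there is `C₅ > 0` with
`d/dt L + C₅ r² L ≤ 0`, hence `L(t) ≤ e^{-C₅ r² t} L(0)`. -/
theorem linearized_energy_decay (a P r δ : ℝ)
    (ha : 0 < a) (hP : 0 < P) (hr : 0 < r) (hδ : 0 < δ)
    (hδ' : δ ≤ min (1/2) (min (a/4) (Real.sqrt P / 2)))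
    (hr' : r ≤ min (1/2) (min (Real.sqrt (P/a)) (Real.sqrt P / 2)))
    (ρ b w : ℝ → ℂ)
    (hρ : ∀ t : ℝ, 0 ≤ t → HasDerivAt ρ (-(r : ℂ) * b t) t)
    (hb : ∀ t : ℝ, 0 ≤ t → HasDerivAt b (-(a : ℂ) * (r:ℂ)^2 * b t + (P : ℂ) * (r:ℂ) * ρ t) t)
    (hw : ∀ t : ℝ, 0 ≤ t → HasDerivAt w (-(r : ℂ)^2 * w t) t) :
    ∃ C₅ : ℝ, 0 < C₅ ∧
      (∀ t : ℝ, 0 ≤ t → ∀ L' : ℝ,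
        HasDerivAt (energyL P δ r ρ b w) L' t →
        L' + C₅ * r ^ 2 * energyL P δ r ρ b w t ≤ 0) ∧
      ∀ t : ℝ, 0 ≤ t →
        energyL P δ r ρ b w t ≤ Real.exp (-C₅ * r ^ 2 * t) * energyL P δ r ρ b w 0 := by
  simp only [le_min_iff] at hδ' hr'
  obtain ⟨hδ_half, hδa, hδP⟩ := hδ'
  obtain ⟨hr_half, hrPa, -⟩ := hr'
  have hδr : 16 * (δ * r) ^ 2 ≤ P := by
    have := (Real.le_sqrt (by positivity) hP.le).1 (le_div_iff₀' two_pos |>.1 hδP)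
    nlinarith [pow_le_pow_left₀ hr.le hr_half 2]
  have har : a * r ^ 2 ≤ P := by
    have := (Real.le_sqrt hr.le (by positivity)).1 hrPa
    rwa [le_div_iff₀ ha, mul_comm] at this
  have hderiv := fun t ht => hasDerivAt_energyL (δ := δ) (hρ t ht) (hb t ht) (hw t ht)
  have hdecay : ∀ t, 0 ≤ t → -r ^ 2 * energyDissipation a P δ r (ρ t) (b t) (w t) ≤
      -min (δ / 2) (min (a / 2) 1) * r ^ 2 * energyL P δ r ρ b w t := fun t _ => by
    nlinarith [mul_le_mul_of_nonneg_left (min_mul_energyL_le_energyDissipation (ρ := ρ)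
      (b := b) (w := w) (t := t) hδ.le hr.le hδ_half hδa har hδr) (sq_nonneg r)]
  refine ⟨_, lt_min (by positivity) (lt_min (by positivity) one_pos), fun t ht L' hL' => ?_,
    fun t ht => le_exp_mul_of_hasDerivAt_le_mul hderiv hdecay ht⟩
  rw [hL'.unique (hderiv t ht)]
  linarith [hdecay t ht]
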